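/- Riemann-sum convergence along the logarithmic grid: for every Schwartz function g : ℝ → ℝ and every natural number k₀ ≥ 1, the sums Σ_{k=k₀}^∞ g(χ(k)/N)² · (χ(k+1) − χ(k))/N converge, as N → ∞ (N ∈ ℕ), to ∫₀^∞ g(y)² dy. -/

import Mathlib

open MeasureTheory

/-- χ(x) = log(2·√(4x² + 4x + 1) + √(16x² + 16x + 5)). -/
noncomputable def chi (x : ℝ) : ℝ :=
  Real.log (2 * Real.sqrt (4 * x ^ 2 + 4 * x + 1) + Real.sqrt (16 * x ^ 2 + 16 * x + 5))

/-!
For `x ≥ -1/2` one has `χ x = arsinh (4x + 2)`, so the grid points `y_k = χ(k)/N` increase to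
infinity with gaps `y_{k+1} - y_k ≤ 2 / ((k + 1) N)`. The square of a Schwartz function is again a
Schwartz function, hence Lipschitz, so on each cell `(y_k, y_{k+1}]` the Riemann term differs from
the integral by at most a constant times `(y_{k+1} - y_k)²`. Summing, the Riemann sum differs from
`∫_{y_{k₀}}^∞ g²` by `O(1/N²)`, and `y_{k₀} → 0`.
-/

open Real Set Filter Topology

theorem SchwartzMap.lipschitzWith {E F : Type*} [NormedAddCommGroup E] [NormedSpace ℝ E]
    [NormedAddCommGroup F] [NormedSpace ℝ F] (f : SchwartzMap E F) :
    LipschitzWith (SchwartzMap.seminorm ℝ 0 1 f).toNNReal f :=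
  lipschitzWith_of_nnnorm_fderiv_le f.differentiable fun x =>
    NNReal.le_toNNReal_of_coe_le <| by
      simpa only [coe_nnnorm, norm_iteratedFDeriv_one] using
        f.norm_iteratedFDeriv_le_seminorm ℝ 1 x

theorem Real.arsinh_sub_arsinh_le {a b : ℝ} (ha : 0 < a) (hab : a ≤ b) :
    arsinh b - arsinh a ≤ (b - a) / a := by
  have hderiv : ∀ x ∈ interior (Ici a), deriv arsinh x ≤ 1 / a := by
    intro x hx
    rw [interior_Ici] at hx
    rw [(hasDerivAt_arsinh x).deriv, inv_eq_one_div]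
    refine one_div_le_one_div_of_le ha ?_
    calc a ≤ √(x ^ 2) := by rw [Real.sqrt_sq (ha.trans hx).le]; exact hx.le
      _ ≤ √(1 + x ^ 2) := sqrt_le_sqrt (by linarith)
  have := (convex_Ici a).image_sub_le_mul_sub_of_deriv_le continuous_arsinh.continuousOn
    differentiable_arsinh.differentiableOn hderiv a self_mem_Ici b hab hab
  rwa [one_div_mul_eq_div] at this

theorem chi_eq_arsinh {x : ℝ} (hx : -1 / 2 ≤ x) : chi x = arsinh (4 * x + 2) := by
  have hsq : 4 * x ^ 2 + 4 * x + 1 = (2 * x + 1) ^ 2 := by ring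
  have hsq' : 16 * x ^ 2 + 16 * x + 5 = 1 + (4 * x + 2) ^ 2 := by ring
  rw [chi, arsinh, hsq, hsq', Real.sqrt_sq (by linarith)]
  ring_nf

theorem chi_nonneg {x : ℝ} (hx : -1 / 2 ≤ x) : 0 ≤ chi x := by
  rw [chi_eq_arsinh hx]
  exact arsinh_nonneg_iff.2 (by linarith)

theorem chi_le_chi {x y : ℝ} (hx : -1 / 2 ≤ x) (hxy : x ≤ y) : chi x ≤ chi y := by
  rw [chi_eq_arsinh hx, chi_eq_arsinh (hx.trans hxy)]
  exact arsinh_le_arsinh.2 (by linarith)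

theorem tendsto_chi_atTop : Tendsto chi atTop atTop := by
  have : Tendsto (fun x : ℝ => arsinh (4 * x + 2)) atTop atTop :=
    sinhOrderIso.symm.tendsto_atTop.comp
      (tendsto_atTop_add_const_right _ _ (tendsto_id.const_mul_atTop four_pos))
  refine this.congr' ?_
  filter_upwards [eventually_ge_atTop (-1 / 2)] with x hx using (chi_eq_arsinh hx).symm

theorem chi_add_one_sub_le {x : ℝ} (hx : 0 ≤ x) : chi (x + 1) - chi x ≤ 2 / (x + 1) := by
  rw [chi_eq_arsinh (by linarith), chi_eq_arsinh (by linarith)]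
  calc arsinh (4 * (x + 1) + 2) - arsinh (4 * x + 2)
      ≤ (4 * (x + 1) + 2 - (4 * x + 2)) / (4 * x + 2) :=
        arsinh_sub_arsinh_le (by linarith) (by linarith)
    _ ≤ 2 / (x + 1) := by
        rw [div_le_div_iff₀ (by linarith) (by linarith)]
        nlinarith

section RiemannSum

variable {f : ℝ → ℝ} {K : NNReal}

theorem LipschitzWith.abs_mul_sub_integral_Ioc_le (hf : LipschitzWith K f) {a b : ℝ}
    (hab : a ≤ b) : |f a * (b - a) - ∫ y in Ioc a b, f y| ≤ K * (b - a) ^ 2 := by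
  have hint : IntervalIntegrable f volume a b := hf.continuous.intervalIntegrable a b
  have hdiff : f a * (b - a) - ∫ y in Ioc a b, f y = ∫ y in a..b, (f a - f y) := by
    rw [intervalIntegral.integral_sub intervalIntegrable_const hint,
      intervalIntegral.integral_const, intervalIntegral.integral_of_le hab, smul_eq_mul,
      mul_comm]
  have hbound : ∀ y ∈ uIoc a b, ‖f a - f y‖ ≤ K * (b - a) := by
    intro y hy
    rw [uIoc_of_le hab] at hy
    calc ‖f a - f y‖ = dist (f a) (f y) := (dist_eq_norm _ _).symm
      _ ≤ K * dist a y := hf.dist_le_mul a y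
      _ ≤ K * (b - a) := by
        rw [Real.dist_eq, abs_sub_comm, abs_of_pos (sub_pos.2 hy.1)]
        gcongr
        exact hy.2
  calc |f a * (b - a) - ∫ y in Ioc a b, f y|
      ≤ K * (b - a) * |b - a| := by
        rw [hdiff, ← Real.norm_eq_abs]
        exact intervalIntegral.norm_integral_le_of_norm_le_const hbound
    _ = K * (b - a) ^ 2 := by rw [abs_of_nonneg (sub_nonneg.2 hab)]; ring

variable {x : ℕ → ℝ}

theorem Monotone.hasSum_integral_Ioc_succ (hx : Monotone x) (hx_top : Tendsto x atTop atTop)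
    (hf : IntegrableOn f (Ioi (x 0))) :
    HasSum (fun k => ∫ y in Ioc (x k) (x (k + 1)), f y) (∫ y in Ioi (x 0), f y) := by
  have hunion : ⋃ k, Ioc (x k) (x (k + 1)) = Ioi (x 0) :=
    iUnion_Ioc_map_succ_eq_Ioi (f := x) (fun k => hx (Nat.zero_le k))
      (not_bddAbove_of_tendsto_atTop hx_top)
  rw [← hunion] at hf ⊢
  exact hasSum_integral_iUnion (fun _ => measurableSet_Ioc) hx.pairwise_disjoint_on_Ioc_succ hf

theorem LipschitzWith.abs_tsum_riemann_sub_integral_Ioi_le (hf : LipschitzWith K f)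
    (hfi : IntegrableOn f (Ioi (x 0))) (hx : Monotone x) (hx_top : Tendsto x atTop atTop)
    (hgap : Summable fun k => (x (k + 1) - x k) ^ 2) :
    |∑' k, f (x k) * (x (k + 1) - x k) - ∫ y in Ioi (x 0), f y|
      ≤ K * ∑' k, (x (k + 1) - x k) ^ 2 := by
  set cell := fun k => ∫ y in Ioc (x k) (x (k + 1)), f y
  have hcell : HasSum cell (∫ y in Ioi (x 0), f y) := hx.hasSum_integral_Ioc_succ hx_top hfi
  have herr : ∀ k, ‖f (x k) * (x (k + 1) - x k) - cell k‖ ≤ K * (x (k + 1) - x k) ^ 2 :=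
    fun k => hf.abs_mul_sub_integral_Ioc_le (hx k.le_succ)
  have hsum_err := (hgap.mul_left (K : ℝ)).of_norm_bounded herr
  have hriemann : Summable fun k => f (x k) * (x (k + 1) - x k) := by
    simpa using hsum_err.add hcell.summable
  rw [← hcell.tsum_eq, ← hriemann.tsum_sub hcell.summable, ← Real.norm_eq_abs,
    ← tsum_mul_left]
  exact tsum_of_norm_bounded (hgap.mul_left _).hasSum herr

end RiemannSum

noncomputable def chiGrid (t₀ : ℝ) (N k : ℕ) : ℝ := chi (k + t₀) / N

section ChiGrid

variable {t₀ : ℝ}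

theorem monotone_chiGrid (ht₀ : -1 / 2 ≤ t₀) (N : ℕ) : Monotone (chiGrid t₀ N) :=
  fun i j hij => by
    unfold chiGrid
    gcongr
    exact chi_le_chi (by linarith [(Nat.cast_nonneg i : (0 : ℝ) ≤ i)]) (by gcongr)

theorem tendsto_chiGrid_atTop {N : ℕ} (hN : 0 < N) : Tendsto (chiGrid t₀ N) atTop atTop :=
  (tendsto_chi_atTop.comp (tendsto_atTop_add_const_right _ t₀ tendsto_natCast_atTop_atTop)
    ).atTop_div_const (Nat.cast_pos.2 hN)

theorem chiGrid_nonneg (ht₀ : -1 / 2 ≤ t₀) (N k : ℕ) : 0 ≤ chiGrid t₀ N k :=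
  div_nonneg (chi_nonneg (by linarith [(Nat.cast_nonneg k : (0 : ℝ) ≤ k)])) N.cast_nonneg

theorem tendsto_chiGrid_zero (ht₀ : -1 / 2 ≤ t₀) :
    Tendsto (fun N => chiGrid t₀ N 0) atTop (𝓝[Ici 0] 0) :=
  tendsto_nhdsWithin_iff.2 ⟨tendsto_const_div_atTop_nhds_zero_nat _,
    .of_forall fun N => chiGrid_nonneg ht₀ N 0⟩

theorem chiGrid_succ_sub_sq_le (ht₀ : 0 ≤ t₀) (N k : ℕ) :
    (chiGrid t₀ N (k + 1) - chiGrid t₀ N k) ^ 2 ≤ 4 / N ^ 2 * (1 / ((k : ℝ) + 1) ^ 2) := by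
  have hk : (0 : ℝ) ≤ k + t₀ := by positivity
  have hgap :
      chiGrid t₀ N (k + 1) - chiGrid t₀ N k = (chi (k + t₀ + 1) - chi (k + t₀)) / N := by
    simp only [chiGrid, Nat.cast_succ]
    ring_nf
  have hgap_le : chi (k + t₀ + 1) - chi (k + t₀) ≤ 2 / ((k : ℝ) + 1) :=
    (chi_add_one_sub_le hk).trans (by gcongr; linarith)
  have hgap_nonneg : 0 ≤ chi (k + t₀ + 1) - chi (k + t₀) :=
    sub_nonneg.2 (chi_le_chi (by linarith) (by linarith))
  calc (chiGrid t₀ N (k + 1) - chiGrid t₀ N k) ^ 2 ≤ (2 / ((k : ℝ) + 1) / N) ^ 2 := by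
        rw [hgap]
        gcongr
    _ = 4 / N ^ 2 * (1 / ((k : ℝ) + 1) ^ 2) := by
        -- keeps `ring` from expanding `(k + 1) ^ 2` under the inverse
        generalize (k : ℝ) + 1 = m
        ring

end ChiGrid

theorem LipschitzWith.tendsto_tsum_chiGrid {f : ℝ → ℝ} {K : NNReal} (hf : LipschitzWith K f)
    (hfi : IntegrableOn f (Ioi 0)) {t₀ : ℝ} (ht₀ : 0 ≤ t₀) :
    Tendsto (fun N : ℕ => ∑' k, f (chiGrid t₀ N k) * (chiGrid t₀ N (k + 1) - chiGrid t₀ N k))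
      atTop (𝓝 (∫ y in Ioi 0, f y)) := by
  have hinv_sq : Summable fun k : ℕ => 1 / ((k : ℝ) + 1) ^ 2 := by
    simpa using (summable_nat_add_iff 1).2 (Real.summable_one_div_nat_pow.2 one_lt_two)
  set C := ∑' k : ℕ, 1 / ((k : ℝ) + 1) ^ 2
  have hbound : ∀ N : ℕ, 0 < N →
      |∑' k, f (chiGrid t₀ N k) * (chiGrid t₀ N (k + 1) - chiGrid t₀ N k)
        - ∫ y in Ioi (chiGrid t₀ N 0), f y| ≤ K * (4 / N ^ 2 * C) := by
    intro N hN
    have hgap := chiGrid_succ_sub_sq_le ht₀ N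
    have hgap_sum : Summable fun k => (chiGrid t₀ N (k + 1) - chiGrid t₀ N k) ^ 2 :=
      (hinv_sq.mul_left _).of_nonneg_of_le (fun _ => sq_nonneg _) hgap
    refine (hf.abs_tsum_riemann_sub_integral_Ioi_le
      (hfi.mono_set (Ioi_subset_Ioi (chiGrid_nonneg (by linarith) N 0)))
      (monotone_chiGrid (by linarith) N) (tendsto_chiGrid_atTop hN) hgap_sum).trans ?_
    refine mul_le_mul_of_nonneg_left ?_ K.coe_nonneg
    rw [← tsum_mul_left]
    exact hgap_sum.tsum_le_tsum hgap (hinv_sq.mul_left _)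
  have hbound_lim : Tendsto (fun N : ℕ => (K : ℝ) * (4 / (N : ℝ) ^ 2 * C)) atTop (𝓝 0) := by
    simpa using (tendsto_const_nhds.div_atTop ((tendsto_pow_atTop two_ne_zero).comp
      tendsto_natCast_atTop_atTop)).mul_const C |>.const_mul (K : ℝ)
  have herr := squeeze_zero_norm' ((eventually_gt_atTop 0).mono fun N hN =>
    (Real.norm_eq_abs _).trans_le (hbound N hN)) hbound_lim
  have hI :
      Tendsto (fun N => ∫ y in Ioi (chiGrid t₀ N 0), f y) atTop (𝓝 (∫ y in Ioi 0, f y)) :=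
    (hfi.continuousOn_Ici_primitive_Ioi 0 self_mem_Ici).tendsto.comp
      (tendsto_chiGrid_zero (by linarith))
  simpa using herr.add hI

theorem riemann_sum_log_grid (g : SchwartzMap ℝ ℝ) (k₀ : ℕ) :
    Filter.Tendsto
      (fun N : ℕ => ∑' k : ℕ,
        (g (chi ((k + k₀ : ℕ) : ℝ) / N)) ^ 2 *
          (chi (((k + k₀ : ℕ) : ℝ) + 1) - chi ((k + k₀ : ℕ) : ℝ)) / N)
      Filter.atTop
      (nhds (∫ y in Set.Ioi (0 : ℝ), (g y) ^ 2)) := by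
  set h := SchwartzMap.smulLeftCLM ℝ (⇑g) g
  have hh : ∀ y, h y = g y ^ 2 := fun y => by
    simp [h, SchwartzMap.smulLeftCLM_apply_apply g.hasTemperateGrowth, sq]
  have := h.lipschitzWith.tendsto_tsum_chiGrid h.integrable.integrableOn k₀.cast_nonneg
  simp only [hh] at this
  refine this.congr fun N => tsum_congr fun k => ?_
  have hcast : ((k + 1 : ℕ) : ℝ) + k₀ = ((k + k₀ : ℕ) : ℝ) + 1 := by push_cast; ring
  rw [chiGrid, chiGrid, hcast, ← Nat.cast_add]
  ring
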